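/- Let n ≥ 4 and let i be an index with 2i ≠ n+1, and set i' = n+1−i. The number of equi-n-squares whose row i, row i', column i, and column i' are each consecutive or reverse-consecutive equals 2·(n²−4n+4)! / ((n−2)!² · (n−4)!^{n−2}). -/

import Mathlib

open Nat Finset Filter

/-- An equi-`n`-square: an `n × n` array with entries in `Fin n` in which
every value appears exactly `n` times. -/
def IsEquiSquare (n : ℕ) (g : Fin n → Fin n → Fin n) : Prop :=
  ∀ k : Fin n, Nat.card {p : Fin n × Fin n // g p.1 p.2 = k} = n

/-- Row `i` is consecutive (1-indexed: entry in column `j` is `j`). -/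
def RowConsec {n : ℕ} (g : Fin n → Fin n → Fin n) (i : Fin n) : Prop :=
  ∀ j : Fin n, g i j = j

/-- Row `i` is reverse-consecutive (1-indexed: entry in column `j` is `n+1-j`). -/
def RowRevConsec {n : ℕ} (g : Fin n → Fin n → Fin n) (i : Fin n) : Prop :=
  ∀ j : Fin n, (g i j : ℕ) + (j : ℕ) + 1 = n

/-- Column `j` is consecutive (1-indexed: entry in row `i` is `i`). -/
def ColConsec {n : ℕ} (g : Fin n → Fin n → Fin n) (j : Fin n) : Prop :=
  ∀ i : Fin n, g i j = i

/-- Column `j` is reverse-consecutive (1-indexed: entry in row `i` is `n+1-i`). -/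
def ColRevConsec {n : ℕ} (g : Fin n → Fin n → Fin n) (j : Fin n) : Prop :=
  ∀ i : Fin n, (g i j : ℕ) + (i : ℕ) + 1 = n

/-!
The four prescribed lines meet in the cells `(i, i)`, `(i, i')`, `(i', i)`, `(i', i')`, and since
`i ≠ i'` the type of row `i` forces the types of the other three lines. This leaves two patterns,
exchanged by replacing every entry `k` by `k'`. In the first pattern the frame formed by the four
lines contains each of `i, i'` twice and every other value four times, and the `(n-2) × (n-2)`
interior can be filled arbitrarily subject to the remaining multiplicities `n - 2` and `n - 4`;
such fillings are counted by the multinomial coefficient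
`((n-2)²)! / ((n-2)!² (n-4)!^(n-2))`.
-/

section FiberCount

open Equiv MulAction

variable {α β : Type*}

theorem mem_orbit_domMulAct_perm_iff [Finite α] {f₀ f : α → β} :
    f ∈ orbit (Perm α)ᵈᵐᵃ f₀ ↔ ∀ b, Nat.card {a // f a = b} = Nat.card {a // f₀ a = b} := by
  constructor
  · rintro ⟨σ, rfl⟩ b
    exact Nat.card_congr ((DomMulAct.mk.symm σ).subtypeEquiv fun a => Iff.rfl)
  · intro h
    have e b : {a // f a = b} ≃ {a // f₀ a = b} := (Finite.card_eq.mp (h b)).some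
    exact ⟨DomMulAct.mk (Equiv.ofFiberEquiv e), funext fun a => Equiv.ofFiberEquiv_map e a⟩

/-- Orbit–stabilizer for `Perm α` acting on `α → β`: the maps with fiber sizes `m` form one orbit,
whose stabilizer permutes each fiber. -/
theorem card_fiberCard_eq_mul_prod_factorial [Finite α] [Fintype β] (m : β → ℕ)
    (hm : ∑ b, m b = Nat.card α) :
    Nat.card {f : α → β // ∀ b, Nat.card {a // f a = b} = m b} * ∏ b, (m b)! =
      (Nat.card α)! := by
  classical
  have := Fintype.ofFinite α
  obtain ⟨e⟩ : Nonempty (α ≃ Σ b, Fin (m b)) := Finite.card_eq.mp (by simp [hm])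
  set f₀ : α → β := fun a => (e a).1
  have hf₀ b : Nat.card {a // f₀ a = b} = m b := by
    rw [Nat.card_congr ((e.subtypeEquiv fun a => Iff.rfl).trans (sigmaSubtype b))]
    simp
  have horbit : Nat.card {f : α → β // ∀ b, Nat.card {a // f a = b} = m b} =
      (stabilizer (Perm α)ᵈᵐᵃ f₀).index := by
    rw [index_stabilizer, ← Nat.card_coe_set_eq]
    exact Nat.card_congr (Equiv.subtypeEquivRight fun f => by
      simp only [hf₀, mem_orbit_domMulAct_perm_iff])
  have hstab : ∏ b, (m b)! = Nat.card (stabilizer (Perm α)ᵈᵐᵃ f₀) := by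
    rw [Nat.card_congr (Equiv.subtypeEquiv (q := fun g : Perm α => f₀ ∘ g = f₀)
      DomMulAct.mk.symm fun _ => DomMulAct.mem_stabilizer_iff),
      Nat.card_eq_fintype_card, DomMulAct.stabilizer_card]
    simp only [← Nat.card_eq_fintype_card, hf₀]
  rw [horbit, hstab, mul_comm, Subgroup.card_mul_index, ← Nat.card_perm]
  exact Nat.card_congr DomMulAct.mk.symm

theorem card_subtype_or_of_involutive [Finite α] {σ : α → α} (hσ : Function.Involutive σ)
    {p : α → Prop} (hp : ∀ x, p x → ¬p (σ x)) :
    Nat.card {x // p x ∨ p (σ x)} = 2 * Nat.card {x // p x} := by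
  classical
  rw [Nat.card_congr (subtypeOrEquiv p (fun x => p (σ x))
      fun _ hp' hpσ x hx => hp x (hp' x hx) (hpσ x hx)),
    Nat.card_sum, two_mul]
  exact congrArg _ (Nat.card_congr ((hσ.toPerm σ).subtypeEquiv fun _ => Iff.rfl))

end FiberCount

theorem Fin.val_add_val_add_one_eq_iff_eq_rev {n : ℕ} {x y : Fin n} :
    (x : ℕ) + y + 1 = n ↔ x = Fin.rev y := by
  rw [Fin.ext_iff, Fin.val_rev]
  omega

@[to_additive]
theorem Fin.prod_ite_eq_or_eq_rev {M : Type*} [CommMonoid M] {n : ℕ} {i : Fin n}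
    (hi : Fin.rev i ≠ i) (a b : M) :
    ∏ k : Fin n, (if k = i ∨ k = Fin.rev i then a else b) = a ^ 2 * b ^ (n - 2) := by
  have h : (Finset.univ.filter fun k : Fin n => k = i ∨ k = Fin.rev i) = {i, Fin.rev i} := by
    ext
    simp
  rw [Finset.prod_ite, Finset.prod_const, Finset.prod_const, Finset.filter_not, h,
    Finset.card_univ_sdiff, Finset.card_pair hi.symm, Fintype.card_fin]

namespace EquiSquare

variable {n : ℕ}

theorem rowRevConsec_iff {g : Fin n → Fin n → Fin n} {i : Fin n} :
    RowRevConsec g i ↔ ∀ j, g i j = Fin.rev j := by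
  simp only [RowRevConsec, Fin.val_add_val_add_one_eq_iff_eq_rev]

theorem colRevConsec_iff {g : Fin n → Fin n → Fin n} {j : Fin n} :
    ColRevConsec g j ↔ ∀ i, g i j = Fin.rev i := by
  simp only [ColRevConsec, Fin.val_add_val_add_one_eq_iff_eq_rev]

def IsFramed (i : Fin n) (g : Fin n → Fin n → Fin n) : Prop :=
  ∀ j, g i j = j ∧ g (Fin.rev i) j = Fin.rev j ∧ g j i = j ∧ g j (Fin.rev i) = Fin.rev j

def revEntries (g : Fin n → Fin n → Fin n) : Fin n → Fin n → Fin n :=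
  fun a b => Fin.rev (g a b)

theorem revEntries_involutive : Function.Involutive (revEntries (n := n)) := by
  intro g
  funext a b
  simp [revEntries]

theorem isEquiSquare_revEntries_iff {g : Fin n → Fin n → Fin n} :
    IsEquiSquare n (revEntries g) ↔ IsEquiSquare n g := by
  have h_rev {g : Fin n → Fin n → Fin n} (h : IsEquiSquare n g) : IsEquiSquare n (revEntries g) :=
    fun k => (Nat.card_congr (Equiv.subtypeEquivRight fun p => by
      simp [revEntries, Fin.rev_eq_iff])).trans (h (Fin.rev k))
  exact ⟨fun h => revEntries_involutive g ▸ h_rev h, h_rev⟩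

theorem not_isFramed_revEntries {i : Fin n} (hi : Fin.rev i ≠ i) {g : Fin n → Fin n → Fin n}
    (hg : IsFramed i g) : ¬IsFramed i (revEntries g) := by
  intro hg'
  have h := (hg' i).1
  simp only [revEntries, (hg i).1] at h
  exact hi h

theorem consec_or_revConsec_iff {i : Fin n} (hi : Fin.rev i ≠ i) (g : Fin n → Fin n → Fin n) :
    ((RowConsec g i ∨ RowRevConsec g i) ∧
        (RowConsec g (Fin.rev i) ∨ RowRevConsec g (Fin.rev i)) ∧
        (ColConsec g i ∨ ColRevConsec g i) ∧
        (ColConsec g (Fin.rev i) ∨ ColRevConsec g (Fin.rev i))) ↔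
      IsFramed i g ∨ IsFramed i (revEntries g) := by
  simp only [RowConsec, ColConsec, rowRevConsec_iff, colRevConsec_iff, IsFramed, revEntries,
    Fin.rev_eq_iff, Fin.rev_rev, forall_and]
  constructor
  -- A mismatch in the cell `(i, i)`, `(i, i')` or `(i', i)` forces `i = i'`.
  · rintro ⟨h₁ | h₁, h₂ | h₂, h₃ | h₃, h₄ | h₄⟩ <;>
      first
      | exact .inl ⟨h₁, h₂, h₃, h₄⟩
      | exact .inr ⟨h₁, h₂, h₃, h₄⟩
      | (have := h₁ i; have := h₃ i; have := h₁ (Fin.rev i); have := h₄ i; have := h₂ i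
         have := h₃ (Fin.rev i); clear h₁ h₂ h₃ h₄; exfalso; grind)
  · rintro (⟨h₁, h₂, h₃, h₄⟩ | ⟨h₁, h₂, h₃, h₄⟩) <;> simp_all

variable (i : Fin n)

abbrev Inner : Type := {a : Fin n // a ≠ i ∧ a ≠ Fin.rev i}

def restrictInner (g : Fin n → Fin n → Fin n) (q : Inner i × Inner i) : Fin n := g q.1 q.2

def extendFramed (f : Inner i × Inner i → Fin n) (a b : Fin n) : Fin n :=
  if ha : a = i then b
  else if ha' : a = Fin.rev i then Fin.rev b
  else if hb : b = i then a
  else if hb' : b = Fin.rev i then Fin.rev a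
  else f (⟨a, ha, ha'⟩, ⟨b, hb, hb'⟩)

def borderCells (k : Fin n) : Finset (Fin n × Fin n) :=
  {(i, k), (Fin.rev i, Fin.rev k), (k, i), (Fin.rev k, Fin.rev i)}

def borderCount (k : Fin n) : ℕ := if k = i ∨ k = Fin.rev i then 2 else 4

variable {i}

theorem card_inner (hi : Fin.rev i ≠ i) : Nat.card (Inner i) = n - 2 := by
  have h a : (a ≠ i ∧ a ≠ Fin.rev i) ↔ a ∈ ({i, Fin.rev i} : Finset (Fin n))ᶜ := by simp
  rw [Nat.card_congr (Equiv.subtypeEquivRight h), Nat.card_eq_fintype_card, Fintype.card_coe,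
    Finset.card_compl, Finset.card_pair hi.symm, Fintype.card_fin]

theorem isFramed_extendFramed (hi : Fin.rev i ≠ i) (f : Inner i × Inner i → Fin n) :
    IsFramed i (extendFramed i f) := by
  intro j
  unfold extendFramed
  refine ⟨?_, ?_, ?_, ?_⟩ <;> split_ifs <;> grind

theorem restrictInner_extendFramed (f : Inner i × Inner i → Fin n) :
    restrictInner i (extendFramed i f) = f := by
  funext ⟨⟨a, ha, ha'⟩, ⟨b, hb, hb'⟩⟩
  simp [restrictInner, extendFramed, ha, ha', hb, hb']

theorem extendFramed_restrictInner {g : Fin n → Fin n → Fin n} (hg : IsFramed i g) :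
    extendFramed i (restrictInner i g) = g := by
  funext a b
  unfold extendFramed restrictInner
  split_ifs <;> subst_vars <;> simp [hg _]

def framedEquiv (hi : Fin.rev i ≠ i) : {g // IsFramed i g} ≃ (Inner i × Inner i → Fin n) where
  toFun g := restrictInner i g
  invFun f := ⟨extendFramed i f, isFramed_extendFramed hi f⟩
  left_inv g := Subtype.ext (extendFramed_restrictInner g.2)
  right_inv := restrictInner_extendFramed

theorem card_borderCells (hi : Fin.rev i ≠ i) (k : Fin n) :
    (borderCells i k).card = borderCount i k := by
  unfold borderCells borderCount
  split_ifs with hk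
  · rcases hk with rfl | rfl <;> simp [hi, Ne.symm hi, Finset.card_insert_of_notMem]
  · have : k ≠ i ∧ k ≠ Fin.rev i := not_or.mp hk
    simp [Finset.card_insert_of_notMem, Ne.symm hi, this, Fin.rev_eq_iff]

theorem mem_borderCells_iff {g : Fin n → Fin n → Fin n} (hg : IsFramed i g) (k : Fin n)
    (p : Fin n × Fin n) :
    p ∈ borderCells i k ↔
      g p.1 p.2 = k ∧ ¬((p.1 ≠ i ∧ p.1 ≠ Fin.rev i) ∧ (p.2 ≠ i ∧ p.2 ≠ Fin.rev i)) := by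
  obtain ⟨a, b⟩ := p
  have := hg a
  have := hg b
  simp only [borderCells, Finset.mem_insert, Finset.mem_singleton, Prod.mk.injEq]
  grind

theorem card_fiber_eq_of_isFramed (hi : Fin.rev i ≠ i) {g : Fin n → Fin n → Fin n}
    (hg : IsFramed i g) (k : Fin n) :
    Nat.card {p : Fin n × Fin n // g p.1 p.2 = k} =
      Nat.card {q : Inner i × Inner i // restrictInner i g q = k} + borderCount i k := by
  let IsInnerCell (p : {p : Fin n × Fin n // g p.1 p.2 = k}) : Prop :=
    (p.1.1 ≠ i ∧ p.1.1 ≠ Fin.rev i) ∧ (p.1.2 ≠ i ∧ p.1.2 ≠ Fin.rev i)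
  have hinner : {p // IsInnerCell p} ≃ {q : Inner i × Inner i // restrictInner i g q = k} :=
    { toFun p := ⟨(⟨p.1.1.1, p.2.1⟩, ⟨p.1.1.2, p.2.2⟩), p.1.2⟩
      invFun q := ⟨⟨(q.1.1.1, q.1.2.1), q.2⟩, q.1.1.2, q.1.2.2⟩
      left_inv _ := rfl
      right_inv _ := rfl }
  have hborder : {p // ¬IsInnerCell p} ≃ borderCells i k :=
    (Equiv.subtypeSubtypeEquivSubtypeInter _ _).trans
      (Equiv.subtypeEquivRight fun p => (mem_borderCells_iff hg k p).symm)
  rw [← card_borderCells hi, ← Nat.card_eq_finsetCard, ← Nat.card_congr hinner,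
    ← Nat.card_congr hborder, ← Nat.card_sum]
  exact Nat.card_congr (Equiv.sumCompl IsInnerCell).symm

theorem isEquiSquare_iff_of_isFramed (hn : 4 ≤ n) (hi : Fin.rev i ≠ i)
    {g : Fin n → Fin n → Fin n} (hg : IsFramed i g) :
    IsEquiSquare n g ↔
      ∀ k, Nat.card {q : Inner i × Inner i // restrictInner i g q = k} = n - borderCount i k := by
  refine forall_congr' fun k => ?_
  have : borderCount i k ≤ 4 := by unfold borderCount; split_ifs <;> omega
  rw [card_fiber_eq_of_isFramed hi hg]
  omega

theorem card_isEquiSquare_isFramed_mul (hn : 4 ≤ n) (hi : Fin.rev i ≠ i) :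
    Nat.card {g // IsEquiSquare n g ∧ IsFramed i g} * ((n - 2)! ^ 2 * (n - 4)! ^ (n - 2)) =
      ((n - 2) * (n - 2))! := by
  have e : {g // IsEquiSquare n g ∧ IsFramed i g} ≃
      {f : Inner i × Inner i → Fin n // ∀ k, Nat.card {q // f q = k} = n - borderCount i k} :=
    (Equiv.subtypeEquivRight fun _ => and_comm).trans <|
      (Equiv.subtypeSubtypeEquivSubtypeInter _ _).symm.trans <|
        (framedEquiv hi).subtypeEquiv fun g => isEquiSquare_iff_of_isFramed hn hi g.2
  have hsub k : n - borderCount i k = if k = i ∨ k = Fin.rev i then n - 2 else n - 4 := by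
    unfold borderCount
    split_ifs <;> rfl
  have hsum : ∑ k, (n - borderCount i k) = Nat.card (Inner i × Inner i) := by
    rw [Nat.card_prod, card_inner hi]
    simp only [hsub, Fin.sum_ite_eq_or_eq_rev hi, smul_eq_mul]
    obtain ⟨m, rfl⟩ := Nat.exists_eq_add_of_le hn
    simp only [Nat.add_sub_cancel_left, show 4 + m - 2 = m + 2 by omega]
    ring
  have hprod : ∏ k, (n - borderCount i k)! = (n - 2)! ^ 2 * (n - 4)! ^ (n - 2) := by
    simp only [hsub, apply_ite Nat.factorial, Fin.prod_ite_eq_or_eq_rev hi]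
  rw [Nat.card_congr e, ← hprod, card_fiberCard_eq_mul_prod_factorial _ hsum, Nat.card_prod,
    card_inner hi]

end EquiSquare

open EquiSquare

/-- For `n ≥ 4` and a non-middle index `i` with opposite index `i' = n+1−i`
(1-indexed; here `i' = Fin.rev i`), the number of equi-`n`-squares whose rows `i`, `i'`
and columns `i`, `i'` are each consecutive or reverse-consecutive equals
`2·(n²−4n+4)! / ((n−2)!²·(n−4)!^{n−2})`. -/
theorem card_rowI_rowI'_colI_colI' (n : ℕ) (hn : 4 ≤ n) (i : Fin n)
    (hi : 2 * ((i : ℕ) + 1) ≠ n + 1) :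
    (Nat.card {g : Fin n → Fin n → Fin n //
        IsEquiSquare n g ∧ (RowConsec g i ∨ RowRevConsec g i) ∧
          (RowConsec g (Fin.rev i) ∨ RowRevConsec g (Fin.rev i)) ∧
          (ColConsec g i ∨ ColRevConsec g i) ∧
          (ColConsec g (Fin.rev i) ∨ ColRevConsec g (Fin.rev i))} : ℚ) =
      2 * ((n ^ 2 - 4 * n + 4)! : ℚ) / (((n - 2)! : ℚ) ^ 2 * ((n - 4)! : ℚ) ^ (n - 2)) := by
  have hi' : Fin.rev i ≠ i := by
    rw [Ne, Fin.ext_iff, Fin.val_rev]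
    omega
  have hcard := card_subtype_or_of_involutive revEntries_involutive
    (p := fun g => IsEquiSquare n g ∧ IsFramed i g)
    fun g hg hg' => not_isFramed_revEntries hi' hg.2 hg'.2
  simp only [isEquiSquare_revEntries_iff, ← and_or_left] at hcard
  have hsq : n ^ 2 - 4 * n + 4 = (n - 2) * (n - 2) := by
    zify [show 4 * n ≤ n ^ 2 by nlinarith, show 2 ≤ n by omega]
    ring
  simp only [consec_or_revConsec_iff hi']
  rw [hcard, hsq, eq_div_iff (by positivity), ← card_isEquiSquare_isFramed_mul hn hi']
  push_cast
  ring
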